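/- Let f_{k+1} <= C_k - delta for all k, where delta > 0 and C_{k+1} = max of f over a finite window of the most recent N+1 values {f_{k+1}, f_k, ..., f_{k+1-N}} intersected with indices <= k+1. Then C_{(N+1)m} <= C_0 - m*delta for all m, so C_k -> -infinity. -/
import Mathlib


theorem stmt_12 (f : ℕ → ℝ) (N : ℕ) (δ : ℝ) (hδ : 0 < δ)
    (C : ℕ → ℝ)
    (hC : ∀ k, C k = (Finset.range (min k N + 1)).sup' (by simp) (fun j => f (k - j)))
    (hdec : ∀ k, f (k + 1) ≤ C k - δ) :
    (∀ m : ℕ, C ((N + 1) * m) ≤ C 0 - m * δ) ∧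
      Filter.Tendsto C Filter.atTop Filter.atBot := by
  have hanti : Antitone C := by
    apply antitone_nat_of_succ_le
    intro k
    rw [hC (k+1)]
    apply Finset.sup'_le
    intro j hj
    simp only [Finset.mem_range] at hj
    rcases Nat.eq_zero_or_pos j with h0 | hpos
    · subst h0
      simpa using (hdec k).trans (by linarith)
    · have hj' : j - 1 ∈ Finset.range (min k N + 1) := by
        simp only [Finset.mem_range]
        omega
      have hle := Finset.le_sup' (fun j => f (k - j)) hj'
      rw [hC k]
      have heq : k + 1 - j = k - (j - 1) := by omega
      rw [heq]
      exact hle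
  have hstep : ∀ k, C (k + (N + 1)) ≤ C k - δ := by
    intro k
    rw [hC (k + (N + 1))]
    apply Finset.sup'_le
    intro j hj
    simp only [Finset.mem_range] at hj
    have heq : k + (N + 1) - j = (k + (N - j)) + 1 := by omega
    rw [heq]
    calc f ((k + (N - j)) + 1) ≤ C (k + (N - j)) - δ := hdec _
    _ ≤ C k - δ := by
        have := hanti (Nat.le_add_right k (N - j))
        linarith
  have hmain : ∀ m : ℕ, C ((N + 1) * m) ≤ C 0 - m * δ := by
    intro m
    induction m with
    | zero => simp
    | succ m ih =>
        have h : (N + 1) * (m + 1) = (N + 1) * m + (N + 1) := by ring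
        rw [h]
        have := hstep ((N + 1) * m)
        push_cast
        linarith
  refine ⟨hmain, ?_⟩
  rw [Filter.tendsto_atTop_atBot]
  intro b
  obtain ⟨m, hm⟩ := exists_nat_gt ((C 0 - b) / δ)
  refine ⟨(N + 1) * m, fun k hk => ?_⟩
  have h1 := hanti hk
  have h2 := hmain m
  have h3 : C 0 - b < m * δ := by
    rw [div_lt_iff₀ hδ] at hm
    linarith
  linarith
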